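/- arXiv:cs/0609161 — 9 statements merged into one kernel-verified Lean document; each statement's English description precedes it below -/
import Mathlib

section
/- The set Λ^m defined recursively by Λ^1 = ℕ₀ and Λ^m = q·Λ^{m-1} ∪ {i ∈ ℕ₀ : i ≥ q^m − q^⌊(m+1)/2⌋} is a numerical semigroup, i.e., it contains 0, is closed under addition, and has finite complement in ℕ₀. -/
/-- The Garcia–Stichtenoth tower of Weierstrass semigroups:
`Λ¹ = ℕ₀`, `Λᵐ = q·Λ^{m-1} ∪ {i : i ≥ qᵐ - q^⌊(m+1)/2⌋}` for `m ≥ 2`. -/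
def GSsemigroup (q : ℕ) : ℕ → Set ℕ
  | 0 => Set.univ
  | 1 => Set.univ
  | (m + 2) => (fun x => q * x) '' GSsemigroup q (m + 1) ∪
      {i : ℕ | q ^ (m + 2) - q ^ ((m + 3) / 2) ≤ i}

/-- `c_m = q^m - q^⌊(m+1)/2⌋`, the conductor of `Λ^m`. -/
def gsC (q m : ℕ) : ℕ := q ^ m - q ^ ((m + 1) / 2)

/-- `g_m = (q^⌊(m+1)/2⌋ - 1)(q^⌈(m-1)/2⌉ - 1)`, the genus of `Λ^m`
(note `⌈(m-1)/2⌉ = ⌊m/2⌋` for `m ≥ 1`). -/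
def gsG (q m : ℕ) : ℕ := (q ^ ((m + 1) / 2) - 1) * (q ^ (m / 2) - 1)

/-- `A_i = {j : q^{2i-1} - q^i ≤ j ≤ q^{2i-1} - q^{i-1} - 1}`. -/
def gsA (q i : ℕ) : Set ℕ :=
  {j : ℕ | q ^ (2 * i - 1) - q ^ i ≤ j ∧ j ≤ q ^ (2 * i - 1) - q ^ (i - 1) - 1}

/-- The enumeration `λ` of `Λ^m`: the increasing bijection `ℕ₀ → Λ^m`. -/
noncomputable def gsEnum (q m : ℕ) : ℕ → ℕ := Nat.nth (fun n => n ∈ GSsemigroup q m)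

/-- `ν_i = #{j : λ_i - λ_j ∈ Λ^m}` (the subtraction being in `ℤ`,
i.e. `∃ a ∈ Λ^m, λ_j + a = λ_i`). -/
noncomputable def gsNu (q m i : ℕ) : ℕ :=
  Set.ncard {j : ℕ | ∃ a ∈ GSsemigroup q m, gsEnum q m j + a = gsEnum q m i}

/-- The order (Feng–Rao) bound `δ_i = min {ν_j : j > i}`. -/
noncomputable def gsDelta (q m i : ℕ) : ℕ := sInf (gsNu q m '' {j : ℕ | i < j})

/-- The semigroup floor `⌊k⌋_{Λ^m}`: the largest element of `Λ^m` not exceeding `k`. -/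
noncomputable def gsFloor (q m k : ℕ) : ℕ := sSup {x ∈ GSsemigroup q m | x ≤ k}

/-- `λ⁻¹(x)` for `x ∈ Λ^m`: the number of elements of `Λ^m` below `x`. -/
noncomputable def gsLinv (q m x : ℕ) : ℕ := Set.ncard {y ∈ GSsemigroup q m | y < x}

/-! By induction on `m`: `q a' + q b' = q (a' + b')` with `a' + b' ∈ Λ^{m-1}`, and a sum with a
summand at least `c_m = q^m - q^⌊(m+1)/2⌋` is at least `c_m`; the complement lies below `c_m`. -/

namespace GSsemigroup

theorem zero_mem (q : ℕ) : ∀ m, 0 ∈ GSsemigroup q m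
  | 0 | 1 => trivial
  | m + 2 => Or.inl ⟨0, zero_mem q (m + 1), mul_zero q⟩

theorem add_mem (q : ℕ) :
    ∀ m, ∀ a ∈ GSsemigroup q m, ∀ b ∈ GSsemigroup q m, a + b ∈ GSsemigroup q m
  | 0 | 1 => fun _ _ _ _ => trivial
  | m + 2 => by
    rintro a (⟨a', ha', rfl⟩ | ha) b (⟨b', hb', rfl⟩ | hb)
    · exact Or.inl ⟨a' + b', add_mem q (m + 1) a' ha' b' hb', mul_add q a' b'⟩
    · exact Or.inr (hb.trans (Nat.le_add_left _ _))
    · exact Or.inr (ha.trans (Nat.le_add_right _ _))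
    · exact Or.inr (ha.trans (Nat.le_add_right _ _))

theorem Ici_subset (q m : ℕ) : Set.Ici (gsC q m) ⊆ GSsemigroup q m := by
  match m with
  | 0 | 1 => exact Set.subset_univ _
  | m + 2 => exact Set.subset_union_right

theorem compl_finite (q m : ℕ) : (GSsemigroup q m)ᶜ.Finite :=
  (Set.finite_Iio (gsC q m)).subset <| by
    simpa only [Set.compl_Ici] using Set.compl_subset_compl.mpr (Ici_subset q m)

end GSsemigroup

theorem stmt0_general (q : ℕ) (m : ℕ) :
    0 ∈ GSsemigroup q m ∧
    (∀ a ∈ GSsemigroup q m, ∀ b ∈ GSsemigroup q m, a + b ∈ GSsemigroup q m) ∧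
    (GSsemigroup q m)ᶜ.Finite :=
  ⟨GSsemigroup.zero_mem q m, GSsemigroup.add_mem q m, GSsemigroup.compl_finite q m⟩

/-- each `Λ^m` is a numerical semigroup. -/
theorem stmt0 (q : ℕ) (hq : 2 ≤ q) (m : ℕ) (hm : 1 ≤ m) :
    0 ∈ GSsemigroup q m ∧
    (∀ a ∈ GSsemigroup q m, ∀ b ∈ GSsemigroup q m, a + b ∈ GSsemigroup q m) ∧
    (GSsemigroup q m)ᶜ.Finite :=
  stmt0_general q m
end

section
/- The conductor of Λ^m (the smallest c with c−1 ∉ Λ^m and c + ℕ₀ ⊆ Λ^m, for m ≥ 2) equals c_m = q^m − q^⌊(m+1)/2⌋. -/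
theorem gsC_pos {q m : ℕ} (hq : 2 ≤ q) (hm : 2 ≤ m) : 0 < gsC q m := by
  have : q ^ ((m + 1) / 2) < q ^ m := Nat.pow_lt_pow_right hq (by omega)
  unfold gsC
  omega

theorem dvd_gsC (q : ℕ) {m : ℕ} (hm : 1 ≤ m) : q ∣ gsC q m :=
  Nat.dvd_sub (dvd_pow_self q (by omega)) (dvd_pow_self q (by omega))

theorem GSsemigroup_of_two_le (q : ℕ) {m : ℕ} (hm : 2 ≤ m) :
    GSsemigroup q m = (fun x => q * x) '' GSsemigroup q (m - 1) ∪ {i | gsC q m ≤ i} := by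
  obtain ⟨m, rfl⟩ : ∃ k, m = k + 2 := ⟨m - 2, by omega⟩
  rfl

theorem Nat.not_dvd_sub_one_of_dvd {q c : ℕ} (hq : 2 ≤ q) (hc : 0 < c) (h : q ∣ c) :
    ¬q ∣ c - 1 := by
  intro h'
  have : q ∣ 1 := by simpa [Nat.sub_sub_self hc] using Nat.dvd_sub h h'
  exact absurd (Nat.le_of_dvd one_pos this) (by omega)

/-- the conductor of `Λ^m` (for `m ≥ 2`) is `c_m = q^m - q^⌊(m+1)/2⌋`. -/
theorem stmt1 (q : ℕ) (hq : 2 ≤ q) (m : ℕ) (hm : 2 ≤ m) :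
    gsC q m - 1 ∉ GSsemigroup q m ∧ ∀ n : ℕ, gsC q m ≤ n → n ∈ GSsemigroup q m := by
  have hc := gsC_pos hq hm
  rw [GSsemigroup_of_two_le q hm]
  refine ⟨?_, fun n hn => Or.inr hn⟩
  rintro (⟨x, -, hx⟩ | hge)
  · exact Nat.not_dvd_sub_one_of_dvd hq hc (dvd_gsC q (by omega)) ⟨x, hx.symm⟩
  · have : gsC q m ≤ gsC q m - 1 := hge
    omega
end

section
/- For all m ≥ 1, Λ^m equals the disjoint union of the sets q^{m−2i+1}·A_i for i = 1, …, ⌊m/2⌋, together with {j ∈ ℕ₀ : j ≥ c_m}, where A_i = {j ∈ ℕ₀ : q^{2i−1} − q^i ≤ j ≤ q^{2i−1} − q^{i−1} − 1} and c_m = q^m − q^⌊(m+1)/2⌋. Moreover these sets are pairwise disjoint. -/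
/-! Multiplying by `q` maps a tail `[c, ∞)` into the tail `[q c, ∞)` except for the
multiples of `q` in `[q c, q d)`, for any `d`. Since `c_{m+1} = q (qᵐ - q^⌊m/2⌋)`, passing
from `Λᵐ` to `Λ^{m+1}` scales every block `q^{m-2i+1}·A_i` by `q` and adds to the new tail
the interval `q·[c_m, qᵐ - q^⌊m/2⌋)`, which is empty for even `m` and equal to
`q·A_{(m+1)/2}` for odd `m`. The scaled block `q^{m-2i+1}·A_i` lies in
`[qᵐ - q^{m-i+1}, qᵐ - q^{m-i})`, and these intervals are increasing in `i` and lie below `c_m`. -/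

def gsBlock (q m i : ℕ) : Set ℕ := (fun x => q ^ (m - 2 * i + 1) * x) '' gsA q i

theorem GSsemigroup_add_two (q m : ℕ) :
    GSsemigroup q (m + 2) = (q * ·) '' GSsemigroup q (m + 1) ∪ Set.Ici (gsC q (m + 2)) :=
  rfl

theorem gsC_succ (q m : ℕ) : gsC q (m + 1) = q * (q ^ m - q ^ (m / 2)) := by
  rw [gsC, Nat.mul_sub, ← pow_succ', ← pow_succ', show (m + 1 + 1) / 2 = m / 2 + 1 by omega]

theorem image_mul_Ici_union_Ici_mul (q c d : ℕ) :
    (q * ·) '' Set.Ici c ∪ Set.Ici (q * d) = (q * ·) '' Set.Ico c d ∪ Set.Ici (q * d) := by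
  refine subset_antisymm ?_ (Set.union_subset_union_left _ (Set.image_mono Set.Ico_subset_Ici_self))
  rintro _ (⟨x, hx, rfl⟩ | hy)
  · rcases lt_or_ge x d with hxd | hxd
    · exact Or.inl ⟨x, ⟨hx, hxd⟩, rfl⟩
    · exact Or.inr (Nat.mul_le_mul_left q hxd)
  · exact Or.inr hy

theorem gsA_succ_eq_Ico {q : ℕ} (hq : 2 ≤ q) (a : ℕ) :
    gsA q (a + 1) = Set.Ico (gsC q (2 * a + 1)) (q ^ (2 * a + 1) - q ^ a) := by
  have : q ^ a < q ^ (2 * a + 1) := Nat.pow_lt_pow_right hq (by omega)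
  ext j
  simp only [gsA, gsC, Set.mem_Ico, Set.mem_ofPred_eq, show 2 * (a + 1) - 1 = 2 * a + 1 by omega,
    show (2 * a + 1 + 1) / 2 = a + 1 by omega, Nat.add_sub_cancel]
  omega

theorem image_mul_gsBlock {q m i : ℕ} (h : 2 * i ≤ m) :
    (q * ·) '' gsBlock q m i = gsBlock q (m + 1) i := by
  rw [gsBlock, gsBlock, Set.image_image, show m + 1 - 2 * i + 1 = m - 2 * i + 1 + 1 by omega]
  congr 1
  funext x
  ring

theorem image_mul_Ici_gsC_union_of_even (q a : ℕ) :
    (q * ·) '' Set.Ici (gsC q (2 * a + 2)) ∪ Set.Ici (gsC q (2 * a + 3)) =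
      Set.Ici (gsC q (2 * a + 3)) := by
  have hC : gsC q (2 * a + 2) = q ^ (2 * a + 2) - q ^ ((2 * a + 2) / 2) := by
    rw [gsC, show (2 * a + 2 + 1) / 2 = (2 * a + 2) / 2 by omega]
  rw [gsC_succ q (2 * a + 2), image_mul_Ici_union_Ici_mul, ← hC, Set.Ico_self, Set.image_empty,
    Set.empty_union]

theorem image_mul_Ici_gsC_union_of_odd {q : ℕ} (hq : 2 ≤ q) (a : ℕ) :
    (q * ·) '' Set.Ici (gsC q (2 * a + 1)) ∪ Set.Ici (gsC q (2 * a + 2)) =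
      gsBlock q (2 * a + 2) (a + 1) ∪ Set.Ici (gsC q (2 * a + 2)) := by
  rw [gsC_succ q (2 * a + 1), image_mul_Ici_union_Ici_mul, show (2 * a + 1) / 2 = a by omega,
    ← gsA_succ_eq_Ico hq, gsBlock, show 2 * a + 2 - 2 * (a + 1) + 1 = 1 by omega]
  simp only [pow_one]

theorem GSsemigroup_succ_eq {q : ℕ} (hq : 2 ≤ q) (k : ℕ) :
    GSsemigroup q (k + 1) =
      (⋃ i ∈ Finset.Icc 1 ((k + 1) / 2), gsBlock q (k + 1) i) ∪ Set.Ici (gsC q (k + 1)) := by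
  induction k with
  | zero => simp [GSsemigroup, gsC]
  | succ k ih =>
    have hblocks : (q * ·) '' ⋃ i ∈ Finset.Icc 1 ((k + 1) / 2), gsBlock q (k + 1) i =
        ⋃ i ∈ Finset.Icc 1 ((k + 1) / 2), gsBlock q (k + 2) i := by
      rw [Set.image_iUnion₂]
      refine Set.iUnion₂_congr fun i hi => image_mul_gsBlock ?_
      have := (Finset.mem_Icc.1 hi).2
      omega
    rw [GSsemigroup_add_two, ih, Set.image_union, hblocks, Set.union_assoc]
    rcases Nat.even_or_odd' k with ⟨a, rfl | rfl⟩
    · rw [image_mul_Ici_gsC_union_of_odd hq, ← Set.union_assoc,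
        show (2 * a + 1) / 2 = a by omega, show (2 * a + 2) / 2 = a + 1 by omega,
        ← Finset.insert_Icc_right_eq_Icc_add_one (by omega), Finset.set_biUnion_insert,
        Set.union_comm (gsBlock _ _ _)]
    · rw [image_mul_Ici_gsC_union_of_even,
        show (2 * a + 1 + 1) / 2 = (2 * a + 1 + 1 + 1) / 2 by omega]

theorem GSsemigroup_eq {q : ℕ} (hq : 2 ≤ q) (m : ℕ) :
    GSsemigroup q m =
      (⋃ i ∈ Finset.Icc 1 (m / 2), gsBlock q m i) ∪ Set.Ici (gsC q m) := by
  cases m with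
  | zero => simp [GSsemigroup, gsC]
  | succ k => exact GSsemigroup_succ_eq hq k

theorem gsBlock_subset_Ico {q m i : ℕ} (hq : 2 ≤ q) (hi : 1 ≤ i) (him : 2 * i ≤ m) :
    gsBlock q m i ⊆ Set.Ico (q ^ m - q ^ (m - i + 1)) (q ^ m - q ^ (m - i)) := by
  rintro _ ⟨x, ⟨hlo, hhi⟩, rfl⟩
  set r := m - 2 * i + 1
  have hm : q ^ m = q ^ r * q ^ (2 * i - 1) := by rw [← pow_add]; congr 1; omega
  have hm₁ : q ^ (m - i + 1) = q ^ r * q ^ i := by rw [← pow_add]; congr 1; omega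
  have hm₂ : q ^ (m - i) = q ^ r * q ^ (i - 1) := by rw [← pow_add]; congr 1; omega
  have hlt : q ^ (i - 1) < q ^ (2 * i - 1) := Nat.pow_lt_pow_right hq (by omega)
  rw [hm, hm₁, hm₂, ← Nat.mul_sub, ← Nat.mul_sub]
  exact ⟨Nat.mul_le_mul_left _ hlo,
    Nat.mul_lt_mul_of_pos_left (by omega) (Nat.pow_pos (by omega))⟩

theorem disjoint_gsBlock {q m i j : ℕ} (hq : 2 ≤ q) (hi : 1 ≤ i) (hij : i < j)
    (hjm : 2 * j ≤ m) :
    Disjoint (gsBlock q m i) (gsBlock q m j) := by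
  refine Disjoint.mono
    ((gsBlock_subset_Ico hq hi (by omega)).trans Set.Ico_subset_Iio_self)
    ((gsBlock_subset_Ico hq (by omega) hjm).trans Set.Ico_subset_Ici_self)
    (Set.Iio_disjoint_Ici ?_)
  have : q ^ (m - j + 1) ≤ q ^ (m - i) := Nat.pow_le_pow_right (by omega) (by omega)
  omega

theorem disjoint_gsBlock_Ici_gsC {q m i : ℕ} (hq : 2 ≤ q) (hi : 1 ≤ i) (him : 2 * i ≤ m) :
    Disjoint (gsBlock q m i) (Set.Ici (gsC q m)) := by
  refine Disjoint.mono_left ((gsBlock_subset_Ico hq hi him).trans Set.Ico_subset_Iio_self)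
    (Set.Iio_disjoint_Ici ?_)
  have : q ^ ((m + 1) / 2) ≤ q ^ (m - i) := Nat.pow_le_pow_right (by omega) (by omega)
  rw [gsC]
  omega

theorem stmt2_general (q : ℕ) (hq : 2 ≤ q) (m : ℕ) :
    GSsemigroup q m =
      (⋃ i ∈ Finset.Icc 1 (m / 2), (fun x => q ^ (m - 2 * i + 1) * x) '' gsA q i) ∪
        {j : ℕ | gsC q m ≤ j} ∧
    (∀ i j : ℕ, 1 ≤ i → i < j → j ≤ m / 2 →
      Disjoint ((fun x => q ^ (m - 2 * i + 1) * x) '' gsA q i)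
        ((fun x => q ^ (m - 2 * j + 1) * x) '' gsA q j)) ∧
    (∀ i : ℕ, 1 ≤ i → i ≤ m / 2 →
      Disjoint ((fun x => q ^ (m - 2 * i + 1) * x) '' gsA q i) {j : ℕ | gsC q m ≤ j}) :=
  ⟨GSsemigroup_eq hq m,
    fun _ _ hi hij hjm => disjoint_gsBlock hq hi hij (by omega),
    fun _ hi him => disjoint_gsBlock_Ici_gsC hq hi (by omega)⟩

/-- `Λ^m` is the disjoint union of the `q^{m-2i+1}·A_i`,
`i = 1, …, ⌊m/2⌋`, and the tail `{j : j ≥ c_m}`. -/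
theorem stmt2 (q : ℕ) (hq : 2 ≤ q) (m : ℕ) (hm : 1 ≤ m) :
    GSsemigroup q m =
      (⋃ i ∈ Finset.Icc 1 (m / 2), (fun x => q ^ (m - 2 * i + 1) * x) '' gsA q i) ∪
        {j : ℕ | gsC q m ≤ j} ∧
    (∀ i j : ℕ, 1 ≤ i → i < j → j ≤ m / 2 →
      Disjoint ((fun x => q ^ (m - 2 * i + 1) * x) '' gsA q i)
        ((fun x => q ^ (m - 2 * j + 1) * x) '' gsA q j)) ∧
    (∀ i : ℕ, 1 ≤ i → i ≤ m / 2 →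
      Disjoint ((fun x => q ^ (m - 2 * i + 1) * x) '' gsA q i) {j : ℕ | gsC q m ≤ j}) :=
  stmt2_general q hq m
end

section
/- The sets q^{m−2i+1}·A_i for i = 1, …, ⌊m/2⌋ are pairwise disjoint; specifically, max(q^{m−2i+1}·A_i) = q^m − q^{m−i} − q^{m−2i+1} is strictly less than min(q^{m−2(i+1)+1}·A_{i+1}) = q^m − q^{m−i}. -/
/-! Each `A_i` is an interval, so `q^{m-2i+1}·A_i` runs from `q^m - q^{m-i+1}` to
`q^m - q^{m-i} - q^{m-2i+1}`; the upper end of the `i`-th block lies below `q^m - q^{m-i}`,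
which is at most the lower end `q^m - q^{m-j+1}` of every later block `j > i`. -/

section

variable {q i : ℕ}

lemma gsA_lower_le_upper (hq : 2 ≤ q) (hi : 1 ≤ i) :
    q ^ (2 * i - 1) - q ^ i ≤ q ^ (2 * i - 1) - q ^ (i - 1) - 1 := by
  have h1 : q ^ (i - 1) < q ^ i := Nat.pow_lt_pow_right hq (by omega)
  have h2 : q ^ i ≤ q ^ (2 * i - 1) := Nat.pow_le_pow_right (by omega) (by omega)
  omega

lemma isLeast_gsA (hq : 2 ≤ q) (hi : 1 ≤ i) : IsLeast (gsA q i) (q ^ (2 * i - 1) - q ^ i) :=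
  isLeast_Icc (gsA_lower_le_upper hq hi)

lemma isGreatest_gsA (hq : 2 ≤ q) (hi : 1 ≤ i) :
    IsGreatest (gsA q i) (q ^ (2 * i - 1) - q ^ (i - 1) - 1) :=
  isGreatest_Icc (gsA_lower_le_upper hq hi)

variable {m : ℕ}

lemma pow_mul_gsA_lower (hi : 1 ≤ i) (him : 2 * i ≤ m) :
    q ^ (m - 2 * i + 1) * (q ^ (2 * i - 1) - q ^ i) = q ^ m - q ^ (m - i + 1) := by
  rw [Nat.mul_sub, ← pow_add, ← pow_add]
  congr 2 <;> omega

lemma pow_mul_gsA_upper (hi : 1 ≤ i) (him : 2 * i ≤ m) :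
    q ^ (m - 2 * i + 1) * (q ^ (2 * i - 1) - q ^ (i - 1) - 1) =
      q ^ m - q ^ (m - i) - q ^ (m - 2 * i + 1) := by
  rw [Nat.mul_sub, Nat.mul_sub, mul_one, ← pow_add, ← pow_add]
  congr 3 <;> omega

lemma isLeast_pow_mul_gsA (hq : 2 ≤ q) (hi : 1 ≤ i) (him : 2 * i ≤ m) :
    IsLeast ((fun x => q ^ (m - 2 * i + 1) * x) '' gsA q i) (q ^ m - q ^ (m - i + 1)) := by
  rw [← pow_mul_gsA_lower hi him]
  exact mul_right_mono.map_isLeast (isLeast_gsA hq hi)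

lemma isGreatest_pow_mul_gsA (hq : 2 ≤ q) (hi : 1 ≤ i) (him : 2 * i ≤ m) :
    IsGreatest ((fun x => q ^ (m - 2 * i + 1) * x) '' gsA q i)
      (q ^ m - q ^ (m - i) - q ^ (m - 2 * i + 1)) := by
  rw [← pow_mul_gsA_upper hi him]
  exact mul_right_mono.map_isGreatest (isGreatest_gsA hq hi)

lemma pow_sub_pow_sub_pow_lt_pow_sub_pow (hq : 2 ≤ q) (hi : 1 ≤ i) (him : i < m) :
    q ^ m - q ^ (m - i) - q ^ (m - 2 * i + 1) < q ^ m - q ^ (m - i) := by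
  have : q ^ (m - i) < q ^ m := Nat.pow_lt_pow_right hq (by omega)
  have : 0 < q ^ (m - 2 * i + 1) := by positivity
  omega

end

theorem stmt3_general (q : ℕ) (hq : 2 ≤ q) (m : ℕ) :
    (∀ i j : ℕ, 1 ≤ i → i < j → j ≤ m / 2 →
      Disjoint ((fun x => q ^ (m - 2 * i + 1) * x) '' gsA q i)
        ((fun x => q ^ (m - 2 * j + 1) * x) '' gsA q j)) ∧
    (∀ i : ℕ, 1 ≤ i → i + 1 ≤ m / 2 →
      IsGreatest ((fun x => q ^ (m - 2 * i + 1) * x) '' gsA q i)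
        (q ^ m - q ^ (m - i) - q ^ (m - 2 * i + 1)) ∧
      IsLeast ((fun x => q ^ (m - 2 * (i + 1) + 1) * x) '' gsA q (i + 1))
        (q ^ m - q ^ (m - i)) ∧
      q ^ m - q ^ (m - i) - q ^ (m - 2 * i + 1) < q ^ m - q ^ (m - i)) := by
  refine ⟨fun i j hi hij hj => ?_, fun i hi hi1 => ?_⟩
  · have hmax := isGreatest_pow_mul_gsA hq hi (m := m) (by omega)
    have hmin := isLeast_pow_mul_gsA hq (by omega : 1 ≤ j) (m := m) (by omega)
    have hlt := pow_sub_pow_sub_pow_lt_pow_sub_pow hq hi (m := m) (by omega)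
    have hmono : q ^ (m - j + 1) ≤ q ^ (m - i) := Nat.pow_le_pow_right (by omega) (by omega)
    refine Set.disjoint_left.2 fun x hxi hxj => ?_
    have := hmax.2 hxi
    have := hmin.2 hxj
    omega
  · have hmin := isLeast_pow_mul_gsA hq (by omega : 1 ≤ i + 1) (m := m) (by omega)
    rw [show m - (i + 1) + 1 = m - i by omega] at hmin
    exact ⟨isGreatest_pow_mul_gsA hq hi (by omega), hmin,
      pow_sub_pow_sub_pow_lt_pow_sub_pow hq hi (by omega)⟩

/-- the sets `q^{m-2i+1}·A_i`, `i = 1, …, ⌊m/2⌋`, are pairwise disjoint;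
specifically `max(q^{m-2i+1}·A_i) = q^m - q^{m-i} - q^{m-2i+1}` is strictly less than
`min(q^{m-2(i+1)+1}·A_{i+1}) = q^m - q^{m-i}`. -/
theorem stmt3 (q : ℕ) (hq : 2 ≤ q) (m : ℕ) (hm : 1 ≤ m) :
    (∀ i j : ℕ, 1 ≤ i → i < j → j ≤ m / 2 →
      Disjoint ((fun x => q ^ (m - 2 * i + 1) * x) '' gsA q i)
        ((fun x => q ^ (m - 2 * j + 1) * x) '' gsA q j)) ∧
    (∀ i : ℕ, 1 ≤ i → i + 1 ≤ m / 2 →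
      IsGreatest ((fun x => q ^ (m - 2 * i + 1) * x) '' gsA q i)
        (q ^ m - q ^ (m - i) - q ^ (m - 2 * i + 1)) ∧
      IsLeast ((fun x => q ^ (m - 2 * (i + 1) + 1) * x) '' gsA q (i + 1))
        (q ^ m - q ^ (m - i)) ∧
      q ^ m - q ^ (m - i) - q ^ (m - 2 * i + 1) < q ^ m - q ^ (m - i)) :=
  stmt3_general q hq m
end

section
/- The number of gaps (genus) of Λ^m is g_m = (q^⌊(m+1)/2⌋ − 1)(q^⌈(m−1)/2⌉ − 1). -/
/-!
`Λ^{m+2}` consists of `q·Λ^{m+1}` together with everything from its conductor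
`c_{m+2} = q·N` on, where `N = q^{m+1} - q^⌊(m+1)/2⌋ ≥ c_{m+1}` bounds the gaps of `Λ^{m+1}`.
Below `q·N` the set `q·Λ^{m+1}` has exactly `N - g_{m+1}` elements, so
`g_{m+2} = q·N - (N - g_{m+1})`, and the closed formula satisfies this recurrence.
-/

theorem ncard_compl_image_mul_union_Ici {S : Set ℕ} {q N : ℕ} (hq : 0 < q)
    (hS : Sᶜ ⊆ Set.Iio N) :
    ((q * ·) '' S ∪ Set.Ici (q * N))ᶜ.ncard + N = q * N + Sᶜ.ncard := by
  have hcompl : ((q * ·) '' S ∪ Set.Ici (q * N))ᶜ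
      = Set.Iio (q * N) \ (q * ·) '' (S ∩ Set.Iio N) := by
    ext x
    simp only [Set.mem_compl_iff, Set.mem_union, Set.mem_image, Set.mem_Ici, Set.mem_sdiff,
      Set.mem_Iio, Set.mem_inter_iff, not_or, not_exists, not_and, not_le]
    constructor
    · rintro ⟨hxS, hx⟩
      exact ⟨hx, fun y hy hyx => hxS y hy.1 hyx⟩
    · rintro ⟨hx, hxS⟩
      refine ⟨fun y hy hyx => hxS y ⟨hy, ?_⟩ hyx, hx⟩
      exact Nat.lt_of_mul_lt_mul_left (hyx ▸ hx : q * y < q * N)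
  have hsub : (q * ·) '' (S ∩ Set.Iio N) ⊆ Set.Iio (q * N) := by
    rintro _ ⟨y, ⟨-, hy⟩, rfl⟩
    exact Nat.mul_lt_mul_of_pos_left hy hq
  have hbelow := Set.ncard_inter_add_ncard_sdiff_eq_ncard (Set.Iio N) S
  rw [Set.inter_comm, Set.sdiff_eq_compl_inter, Set.inter_eq_left.mpr hS, Set.ncard_Iio_nat] at hbelow
  have hmultiples := Set.ncard_sdiff_add_ncard_of_subset hsub
  rw [Set.ncard_image_of_injective _ (mul_right_injective₀ hq.ne'), Set.ncard_Iio_nat] at hmultiples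
  rw [hcompl]
  omega

theorem gsC_add_two (q m : ℕ) : gsC q (m + 2) = q * (q ^ (m + 1) - q ^ ((m + 1) / 2)) := by
  rw [gsC, Nat.mul_sub, ← pow_succ', ← pow_succ', show (m + 2 + 1) / 2 = (m + 1) / 2 + 1 by omega]

theorem compl_GSsemigroup_subset_Iio_gsC (q m : ℕ) :
    (GSsemigroup q (m + 1))ᶜ ⊆ Set.Iio (gsC q (m + 1)) := by
  intro x hx
  cases m with
  | zero => simp [GSsemigroup] at hx
  | succ m =>
    by_contra hle
    exact hx (Or.inr (Set.notMem_Iio.mp hle))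

theorem gsC_succ_le {q : ℕ} (hq : 0 < q) (m : ℕ) :
    gsC q (m + 1) ≤ q ^ (m + 1) - q ^ ((m + 1) / 2) :=
  Nat.sub_le_sub_left (Nat.pow_le_pow_right hq (by omega)) _

theorem gsG_add_two_add {q : ℕ} (hq : 0 < q) (m : ℕ) :
    gsG q (m + 2) + (q ^ (m + 1) - q ^ ((m + 1) / 2))
      = q * (q ^ (m + 1) - q ^ ((m + 1) / 2)) + gsG q (m + 1) := by
  have hpos : ∀ k, 1 ≤ q ^ k := fun k => Nat.one_le_pow _ _ hq
  obtain ⟨k, rfl | rfl⟩ := Nat.even_or_odd' m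
  · rw [gsG, gsG, show (2 * k + 2 + 1) / 2 = k + 1 by omega, show (2 * k + 2) / 2 = k + 1 by omega,
      show (2 * k + 1) / 2 = k by omega]
    zify [hpos k, hpos (k + 1), Nat.pow_le_pow_right hq (by omega : k ≤ 2 * k + 1)]
    ring
  · rw [gsG, gsG, show (2 * k + 1 + 2 + 1) / 2 = k + 2 by omega,
      show (2 * k + 1 + 2) / 2 = k + 1 by omega, show (2 * k + 1 + 1) / 2 = k + 1 by omega]
    zify [hpos (k + 1), hpos (k + 2), Nat.pow_le_pow_right hq (by omega : k + 1 ≤ 2 * k + 1 + 1)]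
    ring

theorem stmt4_general (q : ℕ) (hq : 2 ≤ q) (m : ℕ) :
    Set.ncard (GSsemigroup q m)ᶜ = gsG q m := by
  induction m using Nat.twoStepInduction with
  | zero => simp [GSsemigroup, gsG]
  | one => simp [GSsemigroup, gsG]
  | more m _ ih =>
    have hq0 : 0 < q := by omega
    have hgaps : (GSsemigroup q (m + 1))ᶜ ⊆ Set.Iio (q ^ (m + 1) - q ^ ((m + 1) / 2)) :=
      (compl_GSsemigroup_subset_Iio_gsC q m).trans (Set.Iio_subset_Iio (gsC_succ_le hq0 m))
    have hcount := ncard_compl_image_mul_union_Ici hq0 hgaps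
    rw [← gsC_add_two, ← GSsemigroup_add_two, ih] at hcount
    have hformula := gsG_add_two_add hq0 m
    rw [← gsC_add_two] at hformula
    omega

/-- the genus of `Λ^m` is `g_m = (q^⌊(m+1)/2⌋ - 1)(q^⌈(m-1)/2⌉ - 1)`. -/
theorem stmt4 (q : ℕ) (hq : 2 ≤ q) (m : ℕ) (hm : 1 ≤ m) :
    Set.ncard (GSsemigroup q m)ᶜ = gsG q m :=
  stmt4_general q hq m
end

section
/- The cardinality of the disjoint union ⨆_{i=1}^{⌊m/2⌋} q^{m−2i+1}·A_i equals q^⌊m/2⌋ − 1, where A_i = {j ∈ ℕ₀ : q^{2i−1} − q^i ≤ j ≤ q^{2i−1} − q^{i−1} − 1}. -/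
/-!
Multiplication by `q^(m-2i+1)` maps `A_i = [q^(2i-1) - q^i, q^(2i-1) - q^(i-1))` injectively
into `[q^m - q^(m-i+1), q^m - q^(m-i))`. These intervals are consecutive, so the pieces are
pairwise disjoint, and their cardinalities `q^i - q^(i-1)` telescope to `q^⌊m/2⌋ - 1`.
-/

lemma finite_gsA (q i : ℕ) : (gsA q i).Finite :=
  (Set.finite_Iic _).subset fun _ hj => hj.2

lemma gsA_eq_Ico {q i : ℕ} (hq : 2 ≤ q) (hi : 1 ≤ i) :
    gsA q i = Set.Ico (q ^ (2 * i - 1) - q ^ i) (q ^ (2 * i - 1) - q ^ (i - 1)) := by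
  have : q ^ (i - 1) < q ^ (2 * i - 1) := Nat.pow_lt_pow_right hq (by omega)
  ext j
  simp only [gsA, Set.mem_ofPred_eq, Set.mem_Ico]
  omega

lemma ncard_gsA {q i : ℕ} (hq : 2 ≤ q) (hi : 1 ≤ i) : (gsA q i).ncard = q ^ i - q ^ (i - 1) := by
  rw [gsA_eq_Ico hq hi, ← Finset.coe_Ico, Set.ncard_coe_finset, Nat.card_Ico,
    tsub_tsub_tsub_cancel_left (Nat.pow_le_pow_right (by omega) (by omega))]

lemma image_pow_mul_gsA_subset {q m i : ℕ} (hq : 2 ≤ q) (hi : 1 ≤ i) (him : 2 * i ≤ m) :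
    (fun x => q ^ (m - 2 * i + 1) * x) '' gsA q i ⊆
      Set.Ico (q ^ m - q ^ (m - (i - 1))) (q ^ m - q ^ (m - i)) := by
  have hmono : StrictMono (fun x => q ^ (m - 2 * i + 1) * x) :=
    fun _ _ h => Nat.mul_lt_mul_of_pos_left h (by positivity)
  rw [gsA_eq_Ico hq hi]
  refine hmono.image_Ico_subset.trans_eq ?_
  congr 1 <;> rw [Nat.mul_sub, ← pow_add, ← pow_add] <;> congr 2 <;> omega

lemma pairwiseDisjoint_image_pow_mul_gsA {q : ℕ} (hq : 2 ≤ q) (m : ℕ) :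
    (Finset.Icc 1 (m / 2) : Set ℕ).PairwiseDisjoint
      fun i => (fun x => q ^ (m - 2 * i + 1) * x) '' gsA q i := by
  have hmono : Monotone fun n => q ^ m - q ^ (m - n) :=
    fun _ _ hab => Nat.sub_le_sub_left (Nat.pow_le_pow_right (by omega) (by omega)) _
  have hpiece (i : ℕ) (hi : i ∈ (Finset.Icc 1 (m / 2) : Set ℕ)) :
      (fun x => q ^ (m - 2 * i + 1) * x) '' gsA q i ⊆
        Set.Ico (q ^ m - q ^ (m - Order.pred i)) (q ^ m - q ^ (m - i)) := by
    simp only [Finset.coe_Icc, Set.mem_Icc] at hi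
    exact image_pow_mul_gsA_subset hq hi.1 (by omega)
  exact fun i hi j hj hij =>
    (hmono.pairwise_disjoint_on_Ico_pred hij).mono (hpiece i hi) (hpiece j hj)

lemma Finset.sum_Icc_one_tsub_pred {M : Type*} [AddCommMonoid M] [PartialOrder M] [Sub M]
    [OrderedSub M] [AddLeftMono M] [AddLeftReflectLE M] [ExistsAddOfLE M]
    {f : ℕ → M} (hf : Monotone f) (n : ℕ) :
    ∑ i ∈ Finset.Icc 1 n, (f i - f (i - 1)) = f n - f 0 := by
  rw [← Finset.sum_range_tsub hf, Finset.range_eq_Ico, ← Finset.Ico_add_one_right_eq_Icc,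
    ← zero_add 1, ← Finset.sum_Ico_add']
  simp

theorem stmt5_general (q : ℕ) (hq : 2 ≤ q) (m : ℕ) :
    Set.ncard (⋃ i ∈ Finset.Icc 1 (m / 2), (fun x => q ^ (m - 2 * i + 1) * x) '' gsA q i) =
      q ^ (m / 2) - 1 := by
  simp only [← Finset.mem_coe]
  rw [(Finset.finite_toSet _).ncard_biUnion (fun i _ => (finite_gsA q i).image _)
    (pairwiseDisjoint_image_pow_mul_gsA hq m), finsum_mem_coe_finset]
  calc ∑ i ∈ Finset.Icc 1 (m / 2), ((fun x => q ^ (m - 2 * i + 1) * x) '' gsA q i).ncard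
      = ∑ i ∈ Finset.Icc 1 (m / 2), (q ^ i - q ^ (i - 1)) := by
        refine Finset.sum_congr rfl fun i hi => ?_
        rw [Set.ncard_image_of_injective _ (mul_right_injective₀ (by positivity)),
          ncard_gsA hq (Finset.mem_Icc.1 hi).1]
    _ = q ^ (m / 2) - 1 := by
        simpa using Finset.sum_Icc_one_tsub_pred (pow_right_mono₀ (by omega : 1 ≤ q)) (m / 2)

/-- `#(⨆_{i=1}^{⌊m/2⌋} q^{m-2i+1}·A_i) = q^⌊m/2⌋ - 1`. -/
theorem stmt5 (q : ℕ) (hq : 2 ≤ q) (m : ℕ) (hm : 1 ≤ m) :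
    Set.ncard (⋃ i ∈ Finset.Icc 1 (m / 2), (fun x => q ^ (m - 2 * i + 1) * x) '' gsA q i) =
      q ^ (m / 2) - 1 :=
  stmt5_general q hq m
end

section
/- Let λ be the enumeration of Λ^m. If t ≥ q^⌊m/2⌋ − 1, then λ(t) = c_m + t − q^⌊m/2⌋ + 1, where c_m = q^m − q^⌊(m+1)/2⌋. -/
namespace Nat

variable {p r : ℕ → Prop} [DecidablePred p] [DecidablePred r]

theorem count_add_of_forall_le {a : ℕ} (h : ∀ k, a ≤ k → p k) (s : ℕ) :
    count p (a + s) = count p a + s := by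
  rw [count_add, count_of_forall fun k _ => h _ (Nat.le_add_right a k)]

theorem count_mul_of_forall_lt_iff {q n : ℕ} (hq : 0 < q)
    (hpr : ∀ k < q * n, p k ↔ ∃ x, r x ∧ q * x = k) : count p (q * n) = count r n := by
  rw [count_eq_card_filter_range, count_eq_card_filter_range,
    ← Finset.card_image_of_injective {x ∈ Finset.range n | r x} (mul_right_injective₀ hq.ne')]
  congr 1
  ext k
  simp only [Finset.mem_filter, Finset.mem_range, Finset.mem_image]
  constructor
  · rintro ⟨hk, hpk⟩
    obtain ⟨x, hrx, rfl⟩ := (hpr k hk).1 hpk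
    exact ⟨x, ⟨Nat.lt_of_mul_lt_mul_left hk, hrx⟩, rfl⟩
  · rintro ⟨x, ⟨hx, hrx⟩, rfl⟩
    have hk : q * x < q * n := Nat.mul_lt_mul_of_pos_left hx hq
    exact ⟨hk, (hpr _ hk).2 ⟨x, hrx, rfl⟩⟩

end Nat

attribute [local instance] Classical.propDecidable

theorem mem_GSsemigroup_of_gsC_le {q m n : ℕ} (hm : 1 ≤ m) (hn : gsC q m ≤ n) :
    n ∈ GSsemigroup q m := by
  match m, hn with
  | 1, _ => trivial
  | m + 2, hn => exact Or.inr hn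

theorem mem_GSsemigroup_succ_succ_iff_of_lt {q m n : ℕ} (hn : n < gsC q (m + 2)) :
    n ∈ GSsemigroup q (m + 2) ↔ ∃ x, x ∈ GSsemigroup q (m + 1) ∧ q * x = n := by
  simp only [GSsemigroup, Set.mem_union, Set.mem_image, Set.mem_ofPred_eq]
  exact or_iff_left (not_le.2 hn)

theorem gsC_succ_succ {q : ℕ} (hq : 0 < q) (m : ℕ) :
    gsC q (m + 2) = q * (gsC q (m + 1) + (q ^ ((m + 2) / 2) - q ^ ((m + 1) / 2))) := by
  have h₁ : q ^ ((m + 1) / 2) ≤ q ^ ((m + 2) / 2) := Nat.pow_le_pow_right hq (by omega)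
  have h₂ : q ^ ((m + 2) / 2) ≤ q ^ (m + 1) := Nat.pow_le_pow_right hq (by omega)
  have hc : gsC q (m + 1) + (q ^ ((m + 2) / 2) - q ^ ((m + 1) / 2))
      = q ^ (m + 1) - q ^ ((m + 1) / 2) := by
    rw [show gsC q (m + 1) = q ^ (m + 1) - q ^ ((m + 2) / 2) from rfl]
    omega
  rw [hc, Nat.mul_sub, ← pow_succ', ← pow_succ', gsC, show (m + 1) / 2 + 1 = (m + 3) / 2 by omega]

theorem count_GSsemigroup_gsC {q : ℕ} (hq : 0 < q) (m : ℕ) :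
    Nat.count (· ∈ GSsemigroup q (m + 1)) (gsC q (m + 1)) = q ^ ((m + 1) / 2) - 1 := by
  induction m with
  | zero => simp [gsC]
  | succ m ih =>
    show Nat.count (· ∈ GSsemigroup q (m + 2)) (gsC q (m + 2)) = q ^ ((m + 2) / 2) - 1
    have hmono : q ^ ((m + 1) / 2) ≤ q ^ ((m + 2) / 2) := Nat.pow_le_pow_right hq (by omega)
    have hpos : 1 ≤ q ^ ((m + 1) / 2) := Nat.one_le_pow _ _ hq
    have hC := gsC_succ_succ hq m
    rw [hC, Nat.count_mul_of_forall_lt_iff hq fun k hk =>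
        mem_GSsemigroup_succ_succ_iff_of_lt (hC ▸ hk),
      Nat.count_add_of_forall_le (fun k => mem_GSsemigroup_of_gsC_le (Nat.le_add_left 1 m)), ih]
    omega

/-- for `t ≥ q^⌊m/2⌋ - 1`, `λ(t) = c_m + t - q^⌊m/2⌋ + 1`. -/
theorem stmt7 (q : ℕ) (hq : 2 ≤ q) (m : ℕ) (hm : 1 ≤ m) (t : ℕ)
    (ht : q ^ (m / 2) - 1 ≤ t) :
    gsEnum q m t = gsC q m + (t + 1 - q ^ (m / 2)) := by
  obtain ⟨m, rfl⟩ := Nat.exists_eq_add_of_le' hm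
  have hmem : ∀ n, gsC q (m + 1) ≤ n → n ∈ GSsemigroup q (m + 1) :=
    fun _ => mem_GSsemigroup_of_gsC_le hm
  have hpos : 1 ≤ q ^ ((m + 1) / 2) := Nat.one_le_pow _ _ (by omega)
  have hcount : Nat.count (· ∈ GSsemigroup q (m + 1)) (gsC q (m + 1) + (t + 1 - q ^ ((m + 1) / 2)))
      = t := by
    rw [Nat.count_add_of_forall_le hmem, count_GSsemigroup_gsC (by omega)]
    omega
  have hnth := Nat.nth_count (hmem _ (Nat.le_add_right _ (t + 1 - q ^ ((m + 1) / 2))))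
  rwa [hcount] at hnth
end

section
/- For k < c_m, the largest integer l such that q^{m−2l+1}·c_{2l−1} ≤ k is l = m + 1 − ⌈log_q(q^m − k)⌉, where c_{2l−1} = q^{2l−1} − q^l. -/
/-! For `2l ≤ m` the product `q^(m-2l+1) c_(2l-1)` equals `q^m - q^(m+1-l)`, so the condition
reads `q^m - k ≤ q^(m+1-l)`, i.e. `⌈log_q (q^m - k)⌉ ≤ m + 1 - l`; for `2l > m` the product is at
least `c_m > k`. As `k < c_m` forces `⌈log_q (q^m - k)⌉ > ⌊(m+1)/2⌋`, the admissible `l` form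
exactly the interval `[1, m + 1 - ⌈log_q (q^m - k)⌉]`. -/

lemma gsC_eq_zero_of_le_one {q m : ℕ} (hm : m ≤ 1) : gsC q m = 0 := by
  interval_cases m <;> simp [gsC]

lemma gsC_two_mul_sub_one (q l : ℕ) : gsC q (2 * l - 1) = q ^ (2 * l - 1) - q ^ l := by
  rw [gsC, show (2 * l - 1 + 1) / 2 = l by omega]

lemma pow_mul_gsC_two_mul_sub_one {q m l : ℕ} (hl : 1 ≤ l) (hlm : 2 * l ≤ m) :
    q ^ (m - 2 * l + 1) * gsC q (2 * l - 1) = q ^ m - q ^ (m + 1 - l) := by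
  rw [gsC_two_mul_sub_one, Nat.mul_sub, ← pow_add, ← pow_add]
  congr 2 <;> omega

lemma gsC_le_pow_mul_gsC_two_mul_sub_one {q m l : ℕ} (hq : 2 ≤ q) (hml : m < 2 * l) :
    gsC q m ≤ q ^ (m - 2 * l + 1) * gsC q (2 * l - 1) := by
  rcases Nat.lt_or_ge l 2 with hl | hl
  · simp [gsC_eq_zero_of_le_one (show m ≤ 1 by omega)]
  -- here `m - 2 * l + 1 = 1`, and `q (q^(2l-1) - q^l) ≥ q^(2l) - q^(2l-1) ≥ q^(2l-1) ≥ q^m`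
  have hpow : q ^ (2 * l) = q * q ^ (2 * l - 1) := by
    rw [← pow_succ']; congr 1; omega
  have hl_le : q ^ (l + 1) ≤ q ^ (2 * l - 1) := Nat.pow_le_pow_right (by omega) (by omega)
  have hm_le : q ^ m ≤ q ^ (2 * l - 1) := Nat.pow_le_pow_right (by omega) (by omega)
  have hdouble : 2 * q ^ (2 * l - 1) ≤ q ^ (2 * l) := hpow ▸ Nat.mul_le_mul_right _ hq
  calc gsC q m ≤ q ^ m := Nat.sub_le _ _
    _ ≤ q ^ (2 * l) - q ^ (l + 1) := by omega
    _ = q ^ (m - 2 * l + 1) * gsC q (2 * l - 1) := by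
      rw [show m - 2 * l + 1 = 1 by omega, pow_one, gsC_two_mul_sub_one, Nat.mul_sub,
        hpow, pow_succ' q l]

lemma clog_pow_sub_le {q : ℕ} (hq : 1 < q) (m k : ℕ) : Nat.clog q (q ^ m - k) ≤ m :=
  (Nat.clog_le_iff_le_pow hq).2 (Nat.sub_le _ _)

lemma lt_clog_pow_sub_of_lt_gsC {q m k : ℕ} (hq : 1 < q) (hk : k < gsC q m) :
    (m + 1) / 2 < Nat.clog q (q ^ m - k) := by
  rw [Nat.lt_clog_iff_pow_lt hq]
  exact Nat.lt_sub_of_add_lt (Nat.add_lt_of_lt_sub' hk)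

lemma one_le_and_pow_mul_gsC_le_iff {q m k l : ℕ} (hq : 2 ≤ q) (hk : k < gsC q m) :
    1 ≤ l ∧ q ^ (m - 2 * l + 1) * gsC q (2 * l - 1) ≤ k ↔
      1 ≤ l ∧ l ≤ m + 1 - Nat.clog q (q ^ m - k) := by
  have hclog := lt_clog_pow_sub_of_lt_gsC hq hk
  refine and_congr_right fun hl => ?_
  by_cases hlm : 2 * l ≤ m
  · rw [pow_mul_gsC_two_mul_sub_one hl hlm, tsub_le_iff_tsub_le, ← Nat.clog_le_iff_le_pow hq]
    have := clog_pow_sub_le hq m k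
    omega
  · exact iff_of_false (fun h => (hk.trans_le (gsC_le_pow_mul_gsC_two_mul_sub_one hq
      (by omega))).not_ge h) (by omega)

theorem stmt12_general (q : ℕ) (hq : 2 ≤ q) (m : ℕ) (k : ℕ) (hk : k < gsC q m) :
    IsGreatest {l : ℕ | 1 ≤ l ∧ q ^ (m - 2 * l + 1) * gsC q (2 * l - 1) ≤ k}
      (m + 1 - Nat.clog q (q ^ m - k)) := by
  have hset : {l : ℕ | 1 ≤ l ∧ q ^ (m - 2 * l + 1) * gsC q (2 * l - 1) ≤ k} =
      Set.Icc 1 (m + 1 - Nat.clog q (q ^ m - k)) :=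
    Set.ext fun _ => one_le_and_pow_mul_gsC_le_iff hq hk
  rw [hset]
  exact isGreatest_Icc (by have := clog_pow_sub_le hq m k; omega)

/-- for `k < c_m`, the largest `l ≥ 1` with
`q^{m-2l+1} c_{2l-1} ≤ k` is `l = m + 1 - ⌈log_q (q^m - k)⌉`. -/
theorem stmt12 (q : ℕ) (hq : 2 ≤ q) (m : ℕ) (hm : 1 ≤ m) (k : ℕ) (hk : k < gsC q m) :
    IsGreatest {l : ℕ | 1 ≤ l ∧ q ^ (m - 2 * l + 1) * gsC q (2 * l - 1) ≤ k}
      (m + 1 - Nat.clog q (q ^ m - k)) :=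
  stmt12_general q hq m k hk
end

section
/- For any numerical semigroup Λ with conductor c, genus g, enumeration λ, and ν-sequence ν_i = #{j : λ_i − λ_j ∈ Λ}, one has ν_i = i − g + 1 for all i ≥ 2c − g. -/
/-
Past the conductor the enumeration is a shift: `λ_k = k + g` for `k ≥ c`. For `i ≥ 2c - g` this
gives `λ_i ≥ 2c`, so for every gap `h < c` the number `λ_i - h` lies in `Λ` and equals some `λ_j`
with `j ≤ i`. Hence `j ↦ λ_i - λ_j` is a bijection from the indices `j ≤ i` with `λ_i - λ_j ∉ Λ`
onto the gaps, and the other `i + 1 - g` indices `j ≤ i` are exactly those counted by `ν_i`.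
-/

open Set

section Conductor

variable {S : Set ℕ} {c : ℕ}

lemma compl_subset_Iio_of_forall_le_mem (hS : ∀ k, c ≤ k → k ∈ S) : Sᶜ ⊆ Iio c :=
  fun _ hh => lt_of_not_ge fun hch => hh (hS _ hch)

lemma ncard_compl_le_of_forall_le_mem (hS : ∀ k, c ≤ k → k ∈ S) : Sᶜ.ncard ≤ c := by
  simpa using ncard_le_ncard (compl_subset_Iio_of_forall_le_mem hS) (finite_Iio c)

lemma Nat.count_mem_eq_sub_ncard_compl [DecidablePred (· ∈ S)] (hS : ∀ k, c ≤ k → k ∈ S)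
    {n : ℕ} (hn : c ≤ n) :
    Nat.count (· ∈ S) n = n - Sᶜ.ncard := by
  have hgaps : (({x ∈ Finset.range n | x ∉ S} : Finset ℕ) : Set ℕ) = Sᶜ := by
    ext x
    simp only [Finset.coe_filter, Finset.mem_range, mem_compl_iff]
    exact and_iff_right_of_imp fun hx => (compl_subset_Iio_of_forall_le_mem hS hx).trans_le hn
  have hsplit := Finset.card_filter_add_card_filter_not (s := Finset.range n) (· ∈ S)
  rw [Nat.count_eq_card_filter_range, ← hgaps, ncard_coe_finset]
  simp only [Finset.card_range] at hsplit
  omega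

lemma Nat.nth_mem_eq_add_ncard_compl (hS : ∀ k, c ≤ k → k ∈ S) {k : ℕ} (hk : c ≤ k) :
    Nat.nth (· ∈ S) k = k + Sᶜ.ncard := by
  classical
  have hg := ncard_compl_le_of_forall_le_mem hS
  have hcount : Nat.count (· ∈ S) (k + Sᶜ.ncard) = k := by
    rw [Nat.count_mem_eq_sub_ncard_compl hS (by omega)]
    omega
  simpa [hcount] using Nat.nth_count (p := (· ∈ S)) (hS (k + Sᶜ.ncard) (by omega))

end Conductor

section Enumeration

variable {S : Set ℕ} {i : ℕ}

local notation "ℓ" => Nat.nth (· ∈ S)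

lemma setOf_nth_add_mem_eq_Iic_sdiff (hinf : S.Infinite) :
    {j | ∃ a ∈ S, ℓ j + a = ℓ i} = Iic i \ {j | ℓ i - ℓ j ∉ S} := by
  ext j
  simp only [mem_ofPred_eq, mem_sdiff, mem_Iic, not_not]
  constructor
  · rintro ⟨a, ha, hja⟩
    refine ⟨(Nat.nth_le_nth (p := (· ∈ S)) hinf).1 (by omega), ?_⟩
    rwa [← hja, Nat.add_sub_cancel_left]
  · rintro ⟨hji, hmem⟩
    have := (Nat.nth_le_nth (p := (· ∈ S)) hinf).2 hji
    exact ⟨_, hmem, by omega⟩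

lemma ncard_Iic_inter_nth_sub_notMem (hinf : S.Infinite)
    (hgaps : ∀ h ∉ S, h ≤ ℓ i ∧ ℓ i - h ∈ S) :
    (Iic i ∩ {j | ℓ i - ℓ j ∉ S}).ncard = Sᶜ.ncard := by
  classical
  have hinj : InjOn (fun j => ℓ i - ℓ j) (Iic i ∩ {j | ℓ i - ℓ j ∉ S}) := by
    intro a ha b hb hab
    have := (Nat.nth_le_nth (p := (· ∈ S)) hinf).2 ha.1
    have := (Nat.nth_le_nth (p := (· ∈ S)) hinf).2 hb.1
    exact Nat.nth_injective (p := (· ∈ S)) hinf (by simp only at hab; omega)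
  rw [← hinj.ncard_image]
  congr 1
  ext h
  refine ⟨fun ⟨j, hj, hjh⟩ => hjh ▸ hj.2, fun hh => ?_⟩
  obtain ⟨hle, hmem⟩ := hgaps h hh
  have hnth : ℓ (Nat.count (· ∈ S) (ℓ i - h)) = ℓ i - h := Nat.nth_count hmem
  refine ⟨Nat.count (· ∈ S) (ℓ i - h), ⟨?_, ?_⟩, ?_⟩
  · exact (Nat.nth_le_nth (p := (· ∈ S)) hinf).1 (by omega)
  · simpa [hnth, Nat.sub_sub_self hle] using hh
  · simp only [hnth]
    omega

lemma ncard_setOf_nth_add_mem_eq (hinf : S.Infinite)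
    (hgaps : ∀ h ∉ S, h ≤ ℓ i ∧ ℓ i - h ∈ S) :
    {j | ∃ a ∈ S, ℓ j + a = ℓ i}.ncard = i + 1 - Sᶜ.ncard := by
  have hsplit := ncard_inter_add_ncard_sdiff_eq_ncard (Iic i) {j | ℓ i - ℓ j ∉ S} (finite_Iic i)
  rw [ncard_Iic_inter_nth_sub_notMem hinf hgaps, ncard_Iic_nat] at hsplit
  rw [setOf_nth_add_mem_eq_Iic_sdiff hinf]
  omega

end Enumeration

theorem stmt13_general (Λ : Set ℕ) (c : ℕ) (hc : IsLeast {n : ℕ | ∀ k, n ≤ k → k ∈ Λ} c)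
    (i : ℕ) (hi : 2 * c - Λᶜ.ncard ≤ i) :
    Set.ncard {j : ℕ | ∃ a ∈ Λ, Nat.nth (· ∈ Λ) j + a = Nat.nth (· ∈ Λ) i} =
      i - Λᶜ.ncard + 1 := by
  have hg := ncard_compl_le_of_forall_le_mem hc.1
  have hinf : Λ.Infinite :=
    infinite_of_forall_exists_gt fun a => ⟨max a c + 1, hc.1 _ (by omega), by omega⟩
  have hnth : Nat.nth (· ∈ Λ) i = i + Λᶜ.ncard := Nat.nth_mem_eq_add_ncard_compl hc.1 (by omega)
  have hgaps : ∀ h ∉ Λ, h ≤ Nat.nth (· ∈ Λ) i ∧ Nat.nth (· ∈ Λ) i - h ∈ Λ := fun h hh => by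
    have : h < c := compl_subset_Iio_of_forall_le_mem hc.1 hh
    exact ⟨by omega, hc.1 _ (by omega)⟩
  rw [ncard_setOf_nth_add_mem_eq hinf hgaps]
  omega

/-- for any numerical semigroup with conductor `c` and genus `g`,
`ν_i = i - g + 1` for all `i ≥ 2c - g`. -/
theorem stmt13 (Λ : Set ℕ) (h0 : 0 ∈ Λ) (hadd : ∀ a ∈ Λ, ∀ b ∈ Λ, a + b ∈ Λ)
    (hfin : Λᶜ.Finite) (c : ℕ) (hc : IsLeast {n : ℕ | ∀ k, n ≤ k → k ∈ Λ} c)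
    (i : ℕ) (hi : 2 * c - Λᶜ.ncard ≤ i) :
    Set.ncard {j : ℕ | ∃ a ∈ Λ, Nat.nth (· ∈ Λ) j + a = Nat.nth (· ∈ Λ) i} =
      i - Λᶜ.ncard + 1 :=
  stmt13_general Λ c hc i hi
end
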